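/- Let F be an m×m doubly stochastic matrix with positive diagonal entries whose associated directed graph is strongly connected, let P₁,...,P_m be n×n orthogonal projection matrices with ⋂ᵢ image(Pᵢ) = {0}, and let P = diag(P₁,...,P_m). Then ‖P(F ⊗ I_n)‖₂ < 1. -/

import Mathlib

open Matrix

/-- Operator 2-norm of a real matrix, via the Euclidean spaces. -/
noncomputable def spec {α β : Type*} [Fintype α] [Fintype β] [DecidableEq β]
    (M : Matrix α β ℝ) : ℝ :=
  ‖LinearMap.toContinuousLinearMap (Matrix.toEuclideanLin (𝕜 := ℝ) M)‖

/-- The Kronecker product `F ⊗ Iₙ`, indexed by pairs `(block, coordinate)`. -/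
noncomputable def kronId {m n : ℕ} (F : Matrix (Fin m) (Fin m) ℝ) :
    Matrix (Fin m × Fin n) (Fin m × Fin n) ℝ :=
  Matrix.of fun p q => if p.2 = q.2 then F p.1 q.1 else 0

/-- The block-diagonal matrix `diag(P₁,…,P_m)`. -/
noncomputable def blockDiag {m n : ℕ} (P : Fin m → Matrix (Fin n) (Fin n) ℝ) :
    Matrix (Fin m × Fin n) (Fin m × Fin n) ℝ :=
  Matrix.of fun p q => if p.1 = q.1 then P p.1 p.2 q.2 else 0

lemma opNorm_lt_one {E : Type*} [NormedAddCommGroup E] [NormedSpace ℝ E]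
    [FiniteDimensional ℝ E] (T : E →L[ℝ] E) (h : ∀ x : E, x ≠ 0 → ‖T x‖ < ‖x‖) :
    ‖T‖ < 1 := by
  by_cases hE : Nontrivial E
  · have hcs : IsCompact (Metric.sphere (0:E) 1) := isCompact_sphere 0 1
    have hne : (Metric.sphere (0:E) 1).Nonempty :=
      NormedSpace.sphere_nonempty.mpr zero_le_one
    obtain ⟨x0, hx0, hmax⟩ := hcs.exists_isMaxOn hne
      ((continuous_norm.comp T.continuous).continuousOn)
    have hx0n : ‖x0‖ = 1 := by simpa using hx0
    have hx0ne : x0 ≠ 0 := by intro h0; rw [h0, norm_zero] at hx0n; norm_num at hx0n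
    have hlt : ‖T x0‖ < 1 := by simpa [hx0n] using h x0 hx0ne
    refine lt_of_le_of_lt ?_ hlt
    refine T.opNorm_le_bound (norm_nonneg _) (fun y => ?_)
    rcases eq_or_ne y 0 with rfl | hy
    · simp
    · have hyn : ‖y‖⁻¹ • y ∈ Metric.sphere (0:E) 1 := by
        simp [norm_smul, abs_of_nonneg, inv_mul_cancel₀ (norm_ne_zero_iff.mpr hy)]
      have hm := hmax hyn
      have hkey : ‖y‖⁻¹ * ‖T y‖ ≤ ‖T x0‖ := by
        have : ‖T (‖y‖⁻¹ • y)‖ ≤ ‖T x0‖ := hm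
        rwa [T.map_smul, norm_smul, norm_inv, norm_norm] at this
      have hpos : (0:ℝ) < ‖y‖ := norm_pos_iff.mpr hy
      calc ‖T y‖ = ‖y‖ * (‖y‖⁻¹ * ‖T y‖) := by field_simp
        _ ≤ ‖y‖ * ‖T x0‖ := mul_le_mul_of_nonneg_left hkey hpos.le
        _ = ‖T x0‖ * ‖y‖ := mul_comm _ _
  · have hsub : Subsingleton E := not_nontrivial_iff_subsingleton.mp hE
    have hT : T = 0 := by ext x; exact Subsingleton.elim _ _
    rw [hT, norm_zero]; norm_num

lemma projStep {n : ℕ} (Q : Matrix (Fin n) (Fin n) ℝ) (hs : Qᵀ = Q) (hi : Q*Q = Q)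
    (v : Fin n → ℝ) :
    ∑ k, (Q.mulVec v k)^2 = ∑ k, (v k)^2 - ∑ k, (v k - Q.mulVec v k)^2 := by
  set w := Q.mulVec v with hw
  have horth : w ⬝ᵥ w = v ⬝ᵥ w := by
    calc w ⬝ᵥ w = (Q *ᵥ v) ⬝ᵥ (Q *ᵥ v) := rfl
      _ = ((Q *ᵥ v) ᵥ* Q) ⬝ᵥ v := (dotProduct_mulVec _ _ _)
      _ = (Qᵀ *ᵥ (Q *ᵥ v)) ⬝ᵥ v := by rw [← Matrix.mulVec_transpose]
      _ = ((Qᵀ*Q) *ᵥ v) ⬝ᵥ v := by rw [Matrix.mulVec_mulVec]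
      _ = (Q *ᵥ v) ⬝ᵥ v := by rw [hs, hi]
      _ = v ⬝ᵥ w := dotProduct_comm _ _
  have h1 : ∑ k, (v k - w k)^2 = ∑ k, (v k)^2 - 2*(v ⬝ᵥ w) + ∑ k, (w k)^2 := by
    simp only [dotProduct, Finset.mul_sum, ← Finset.sum_add_distrib, ← Finset.sum_sub_distrib]
    apply Finset.sum_congr rfl; intro k _; ring
  have h2 : ∑ k, (w k)^2 = w ⬝ᵥ w := by simp [dotProduct, sq]
  rw [h1, h2, horth]; ring

lemma core (m n : ℕ) (F : Matrix (Fin m) (Fin m) ℝ)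
    (hnonneg : ∀ i j, 0 ≤ F i j)
    (hrow : ∀ i, ∑ j, F i j = 1) (hcol : ∀ j, ∑ i, F i j = 1)
    (hdiag : ∀ i, 0 < F i i)
    (hconn : ∀ i j : Fin m, Relation.ReflTransGen (fun a b : Fin m => 0 < F b a) i j)
    (P : Fin m → Matrix (Fin n) (Fin n) ℝ)
    (hsymm : ∀ i, (P i)ᵀ = P i) (hidem : ∀ i, P i * P i = P i)
    (htriv : (⨅ i : Fin m, LinearMap.range (Matrix.mulVecLin (P i))) = ⊥)
    (x : Fin m × Fin n → ℝ) (hx : x ≠ 0) :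
    ∑ p, ((_root_.blockDiag P * kronId F).mulVec x p)^2 < ∑ p, (x p)^2 := by
  set y : Fin m → Fin n → ℝ := fun i k => ∑ j, F i j * x (j, k) with hy
  set z : Fin m → Fin n → ℝ := fun i => (P i).mulVec (y i) with hz
  -- identify the matrix action
  have hkron : ∀ p : Fin m × Fin n, (kronId F (n := n)).mulVec x p = y p.1 p.2 := by
    rintro ⟨j, k⟩
    simp only [Matrix.mulVec, dotProduct, kronId, Matrix.of_apply, Fintype.sum_prod_type]
    simp only [hy]
    apply Finset.sum_congr rfl; intro a _
    simp [ite_mul]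
  have hMx : ∀ p : Fin m × Fin n, (_root_.blockDiag P * kronId F).mulVec x p = z p.1 p.2 := by
    rintro ⟨i, k⟩
    rw [← Matrix.mulVec_mulVec]
    simp only [Matrix.mulVec, dotProduct, _root_.blockDiag, Matrix.of_apply, Fintype.sum_prod_type]
    rw [Finset.sum_eq_single i]
    · simp only [hz, Matrix.mulVec, dotProduct, if_pos]
      apply Finset.sum_congr rfl; intro b _
      congr 1
      simpa [Matrix.mulVec, dotProduct, Fintype.sum_prod_type] using hkron (i, b)
    · intro a _ ha; simp [Ne.symm ha, ha]
    · intro h; exact absurd (Finset.mem_univ i) h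
  -- rewrite both sides as double sums
  have hLHS : ∑ p : Fin m × Fin n, ((_root_.blockDiag P * kronId F).mulVec x p)^2
      = ∑ i, ∑ k, (z i k)^2 := by
    rw [Fintype.sum_prod_type]
    exact Finset.sum_congr rfl fun i _ => Finset.sum_congr rfl fun k _ => by rw [hMx (i,k)]
  have hRHS : ∑ p : Fin m × Fin n, (x p)^2 = ∑ j, ∑ k, (x (j,k))^2 :=
    Fintype.sum_prod_type _
  rw [hLHS, hRHS]
  -- Jensen identity per block row
  have hjensen : ∀ i, ∑ j, F i j * (∑ k, (x (j,k) - y i k)^2)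
      = ∑ j, F i j * (∑ k, (x (j,k))^2) - ∑ k, (y i k)^2 := by
    intro i
    have hexp : ∀ j, ∑ k, (x (j,k) - y i k)^2
        = ∑ k, (x (j,k))^2 - 2 * ∑ k, x (j,k) * y i k + ∑ k, (y i k)^2 := by
      intro j
      simp only [Finset.mul_sum, ← Finset.sum_add_distrib, ← Finset.sum_sub_distrib]
      apply Finset.sum_congr rfl; intro k _; ring
    have hB : ∑ j, F i j * ∑ k, x (j,k) * y i k = ∑ k, (y i k)^2 := by
      simp only [Finset.mul_sum]
      rw [Finset.sum_comm]
      apply Finset.sum_congr rfl; intro k _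
      simp only [hy, sq]
      rw [Finset.sum_mul]
      apply Finset.sum_congr rfl; intro j _; ring
    calc ∑ j, F i j * (∑ k, (x (j,k) - y i k)^2)
        = ∑ j, (F i j * (∑ k, (x (j,k))^2) - 2 * (F i j * ∑ k, x (j,k) * y i k)
            + F i j * ∑ k, (y i k)^2) := by
          apply Finset.sum_congr rfl; intro j _; rw [hexp j]; ring
      _ = ∑ j, F i j * (∑ k, (x (j,k))^2) - 2 * ∑ j, F i j * ∑ k, x (j,k) * y i k
            + (∑ j, F i j) * ∑ k, (y i k)^2 := by
          rw [Finset.sum_add_distrib, Finset.sum_sub_distrib, ← Finset.mul_sum,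
            Finset.sum_mul]
      _ = ∑ j, F i j * (∑ k, (x (j,k))^2) - ∑ k, (y i k)^2 := by
          rw [hB, hrow i]; ring
  -- total decomposition
  set D : ℝ := ∑ i, (∑ j, F i j * (∑ k, (x (j,k) - y i k)^2) + ∑ k, (y i k - z i k)^2)
    with hD
  have hdecomp : ∑ i, ∑ k, (z i k)^2 = ∑ j, ∑ k, (x (j,k))^2 - D := by
    have hzi : ∀ i, ∑ k, (z i k)^2 = ∑ k, (y i k)^2 - ∑ k, (y i k - z i k)^2 := fun i =>
      projStep (P i) (hsymm i) (hidem i) (y i)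
    have hswap : ∑ i, ∑ j, F i j * (∑ k, (x (j,k))^2) = ∑ j, ∑ k, (x (j,k))^2 := by
      rw [Finset.sum_comm]
      apply Finset.sum_congr rfl; intro j _
      rw [← Finset.sum_mul, hcol j, one_mul]
    rw [hD]
    rw [Finset.sum_add_distrib]
    have : ∑ i, ∑ k, (z i k)^2
        = ∑ i, (∑ j, F i j * (∑ k, (x (j,k))^2) - ∑ j, F i j * (∑ k, (x (j,k) - y i k)^2)
            - ∑ k, (y i k - z i k)^2) := by
      apply Finset.sum_congr rfl; intro i _
      have h1 := hzi i
      have h2 := hjensen i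
      linarith
    rw [this]
    simp only [Finset.sum_sub_distrib]
    rw [hswap]; ring
  rw [hdecomp]
  -- D > 0
  have hDnonneg0 : ∀ i ∈ Finset.univ,
      0 ≤ ∑ j, F i j * (∑ k, (x (j,k) - y i k)^2) + ∑ k, (y i k - z i k)^2 := by
    intro i _
    apply add_nonneg
    · exact Finset.sum_nonneg fun j _ => mul_nonneg (hnonneg i j)
        (Finset.sum_nonneg fun k _ => sq_nonneg _)
    · exact Finset.sum_nonneg fun k _ => sq_nonneg _
  have hDpos : 0 < D := by
    rcases (Finset.sum_nonneg hDnonneg0).lt_or_eq with h | h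
    · exact h
    -- D = 0: derive contradiction
    exfalso
    have hterm := (Finset.sum_eq_zero_iff_of_nonneg hDnonneg0).mp h.symm
    have hzero : ∀ i, ∑ j, F i j * (∑ k, (x (j,k) - y i k)^2) = 0
        ∧ ∑ k, (y i k - z i k)^2 = 0 := by
      intro i
      have h1 := hterm i (Finset.mem_univ i)
      have ha : 0 ≤ ∑ j, F i j * (∑ k, (x (j,k) - y i k)^2) :=
        Finset.sum_nonneg fun j _ => mul_nonneg (hnonneg i j)
          (Finset.sum_nonneg fun k _ => sq_nonneg _)
      have hb : 0 ≤ ∑ k, (y i k - z i k)^2 :=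
        Finset.sum_nonneg fun k _ => sq_nonneg _
      constructor <;> linarith [(add_eq_zero_iff_of_nonneg ha hb).mp h1]
    have hzy : ∀ i, ∀ k, z i k = y i k := by
      intro i k
      have h2 := (hzero i).2
      have := (Finset.sum_eq_zero_iff_of_nonneg (fun k _ => sq_nonneg (y i k - z i k))).mp h2
        k (Finset.mem_univ k)
      have := sq_eq_zero_iff.mp this
      linarith
    have hxy : ∀ i j, 0 < F i j → ∀ k, x (j, k) = y i k := by
      intro i j hF k
      have h1 := (hzero i).1
      have hj := (Finset.sum_eq_zero_iff_of_nonneg (fun j _ => mul_nonneg (hnonneg i j)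
        (Finset.sum_nonneg fun k _ => sq_nonneg (x (j,k) - y i k)))).mp h1 j (Finset.mem_univ j)
      have hS : ∑ k, (x (j,k) - y i k)^2 = 0 := by
        rcases mul_eq_zero.mp hj with h | h
        · exact absurd h hF.ne'
        · exact h
      have := (Finset.sum_eq_zero_iff_of_nonneg (fun k _ => sq_nonneg _)).mp hS
        k (Finset.mem_univ k)
      have := sq_eq_zero_iff.mp this
      linarith
    have hyx : ∀ i k, y i k = x (i, k) := fun i k => (hxy i i (hdiag i) k).symm
    -- all blocks of x equal along connectivity
    have hchain : ∀ i j : Fin m, ∀ k, x (i, k) = x (j, k) := by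
      intro i j
      induction hconn i j with
      | refl => intro k; rfl
      | tail hab hbc ih =>
        intro k
        rename_i b c
        rw [ih k]
        rw [hxy c b hbc k, hyx c k]
    obtain ⟨p0, hp0⟩ : ∃ p, x p ≠ 0 := by
      by_contra hno
      push_neg at hno
      exact hx (funext hno)
    set i0 := p0.1
    set v : Fin n → ℝ := fun k => x (i0, k) with hv
    have hvj : ∀ j k, x (j, k) = v k := fun j k => (hchain i0 j k).symm
    have hvmem : ∀ j : Fin m, v ∈ LinearMap.range (Matrix.mulVecLin (P j)) := by
      intro j
      refine ⟨v, ?_⟩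
      have hyv : y j = v := funext fun k => (hyx j k).trans (hvj j k)
      rw [Matrix.mulVecLin_apply]
      calc P j *ᵥ v = P j *ᵥ y j := by rw [hyv]
        _ = z j := rfl
        _ = v := funext fun k => by rw [hzy j k, hyx j k, hvj j k]
    have hvbot : v ∈ (⨅ i : Fin m, LinearMap.range (Matrix.mulVecLin (P i))) :=
      Submodule.mem_iInf _ |>.mpr hvmem
    rw [htriv] at hvbot
    have hv0 : v = 0 := hvbot
    apply hp0
    have : x (i0, p0.2) = v p0.2 := rfl
    rw [show p0 = (i0, p0.2) from rfl, this, hv0]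
    rfl
  linarith

theorem proj_mul_doubly_stochastic_contraction
    (m n : ℕ) (F : Matrix (Fin m) (Fin m) ℝ)
    (hnonneg : ∀ i j, 0 ≤ F i j)
    (hrow : ∀ i, ∑ j, F i j = 1) (hcol : ∀ j, ∑ i, F i j = 1)
    (hdiag : ∀ i, 0 < F i i)
    (hconn : ∀ i j : Fin m, Relation.ReflTransGen (fun a b : Fin m => 0 < F b a) i j)
    (P : Fin m → Matrix (Fin n) (Fin n) ℝ)
    (hsymm : ∀ i, (P i)ᵀ = P i) (hidem : ∀ i, P i * P i = P i)
    (htriv : (⨅ i : Fin m, LinearMap.range (Matrix.mulVecLin (P i))) = ⊥) :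
    spec (blockDiag P * kronId F) < 1 := by
  have key := core m n F hnonneg hrow hcol hdiag hconn P hsymm hidem htriv
  set M : Matrix (Fin m × Fin n) (Fin m × Fin n) ℝ := _root_.blockDiag P * kronId F with hM
  unfold spec
  apply opNorm_lt_one
  intro x hx
  have hx' : (fun p : Fin m × Fin n => x p) ≠ (0 : Fin m × Fin n → ℝ) := by
    intro h
    apply hx
    ext p
    exact congrFun h p
  have hk := key (fun p => x p) hx'
  have happ : ∀ p : Fin m × Fin n,
      (LinearMap.toContinuousLinearMap (Matrix.toEuclideanLin (𝕜 := ℝ) M) x) p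
        = M.mulVec (fun q => x q) p := fun p => rfl
  rw [EuclideanSpace.norm_eq, EuclideanSpace.norm_eq]
  apply Real.sqrt_lt_sqrt (Finset.sum_nonneg fun p _ => sq_nonneg _)
  calc ∑ p, ‖(LinearMap.toContinuousLinearMap (Matrix.toEuclideanLin (𝕜 := ℝ) M)) x p‖ ^ 2
      = ∑ p, (M.mulVec (fun q => x q) p) ^ 2 := by
        apply Finset.sum_congr rfl; intro p _
        rw [happ p, Real.norm_eq_abs, sq_abs]
    _ < ∑ p, (x p) ^ 2 := hk
    _ = ∑ p, ‖x p‖ ^ 2 := by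
        apply Finset.sum_congr rfl; intro p _
        rw [Real.norm_eq_abs, sq_abs]
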